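/- The inert-substitution reduction →βi of the fireball calculus is strongly confluent: if u ←βi t →βi s and u ≠ s then there exists r with u →βi r ←βi s. -/
import Mathlib


/-- λ-terms in de Bruijn notation: variables, abstractions, applications. -/
inductive Tm : Type
  | var : Nat → Tm
  | lam : Tm → Tm
  | app : Tm → Tm → Tm

namespace Tm

/-- Shift (by one) the free de Bruijn indices `≥ k`. -/
def shift (k : Nat) : Tm → Tm
  | var n => if k ≤ n then var (n+1) else var n
  | lam t => lam (shift (k+1) t)
  | app t u => app (shift k t) (shift k u)

/-- Capture-avoiding substitution of `u` for the free variable `k` in a term. -/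
def subst : Tm → Nat → Tm → Tm
  | var n, k, u => if n = k then u else if k < n then var (n-1) else var n
  | lam t, k, u => lam (subst t (k+1) (shift 0 u))
  | app t s, k, u => app (subst t k u) (subst s k u)

/-- Values: variables and abstractions. -/
inductive IsValue : Tm → Prop
  | var : IsValue (var n)
  | lam : IsValue (lam t)

end Tm
open Tm

mutual
/-- Inert terms: `i ::= x | i f`. -/
inductive Inert : Tm → Prop
  | var : Inert (.var n)
  | app : Inert i → Fireball f → Inert (.app i f)
/-- Fireballs: `f ::= λx.t | i`. -/
inductive Fireball : Tm → Prop
  | lam : Fireball (.lam t)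
  | inert : Inert i → Fireball i
end

/-- Abstraction steps: root rule `(λx.t)(λy.u) ↦ t[x:=λy.u]`, weak closure. -/
inductive StepBL : Tm → Tm → Prop
  | beta : StepBL (.app (.lam t) (.lam u)) (subst t 0 (.lam u))
  | appL : StepBL t t' → StepBL (.app t u) (.app t' u)
  | appR : StepBL u u' → StepBL (.app t u) (.app t u')

/-- Inert steps: root rule `(λx.t)i ↦ t[x:=i]` with `i` inert, weak closure. -/
inductive StepBI : Tm → Tm → Prop
  | beta : Inert i → StepBI (.app (.lam t) i) (subst t 0 i)
  | appL : StepBI t t' → StepBI (.app t u) (.app t' u)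
  | appR : StepBI u u' → StepBI (.app t u) (.app t u')

/-- The fireball reduction `→βf = →βλ ∪ →βi`. -/
def StepBF (t u : Tm) : Prop := StepBL t u ∨ StepBI t u

theorem inert_normal : ∀ t, (Inert t → ∀ u, ¬ StepBI t u) ∧ (Fireball t → ∀ u, ¬ StepBI t u) := by
  intro t
  induction t with
  | var n => constructor <;> (intro _ u h; cases h)
  | lam t ih =>
    constructor
    · intro h; cases h
    · intro _ u h; cases h
  | app a b iha ihb =>
    have key : Inert (Tm.app a b) → ∀ u, ¬ StepBI (Tm.app a b) u := by
      intro hI u h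
      cases hI with
      | app hia hfb =>
        cases h with
        | beta hi => cases hia
        | appL hs => exact iha.1 hia _ hs
        | appR hs => exact ihb.2 hfb _ hs
    constructor
    · exact key
    · intro hf; cases hf with
      | inert hi => exact key hi

/-- `→βi` is strongly confluent. -/
theorem betai_strongly_confluent (t u s : Tm)
    (h1 : StepBI t u) (h2 : StepBI t s) (hne : u ≠ s) :
    ∃ r, StepBI u r ∧ StepBI s r := by
  induction h1 generalizing s with
  | @beta i a ha =>
    cases h2 with
    | beta hi => exact absurd rfl hne
    | appL hs => cases hs
    | appR hs => exact absurd ((inert_normal _).1 ha _ hs) id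
  | @appL a a' b hs ih =>
    cases h2 with
    | beta hi => cases hs
    | @appL _ a'' _ hs' =>
      by_cases he : a' = a''
      · exact absurd (by rw [he]) hne
      · obtain ⟨r, hr1, hr2⟩ := ih _ hs' he
        exact ⟨Tm.app r b, StepBI.appL hr1, StepBI.appL hr2⟩
    | appR hs' =>
      exact ⟨_, StepBI.appR hs', StepBI.appL hs⟩
  | @appR b b' a hs ih =>
    cases h2 with
    | beta hi => exact absurd hs ((inert_normal _).1 hi _)
    | appL hs' =>
      exact ⟨_, StepBI.appL hs', StepBI.appR hs⟩
    | @appR _ b'' _ hs' =>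
      by_cases he : b' = b''
      · exact absurd (by rw [he]) hne
      · obtain ⟨r, hr1, hr2⟩ := ih _ hs' he
        exact ⟨Tm.app a r, StepBI.appR hr1, StepBI.appR hr2⟩
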